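/- arXiv:2105.07767 — 4 statements merged into one kernel-verified Lean document; each statement's English description precedes it below -/
import Mathlib

section
/- Let Θ ⊆ ℝ^d be a convex open set and φ : Θ → ℝ a differentiable function such that Φ = exp(α·φ) is concave for some α > 0. Then for all θ, θ' ∈ Θ, the L^(α)-divergence L[θ:θ'] = (1/α)·log(1 + α·⟨∇φ(θ'), θ − θ'⟩) − (φ(θ) − φ(θ')) is nonnegative (in particular the argument of the logarithm is positive). -/
open RealInnerProductSpace Real

/-- Nonnegativity of the L^(α)-divergence of an α-exponentially
concave function, together with positivity of the argument of the logarithm. -/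
theorem L_alpha_divergence_nonneg
    {d : ℕ} {Θ : Set (EuclideanSpace ℝ (Fin d))} (hΘconv : Convex ℝ Θ)
    (hΘopen : IsOpen Θ) {α : ℝ} (hα : 0 < α)
    (φ : EuclideanSpace ℝ (Fin d) → ℝ) (g : EuclideanSpace ℝ (Fin d) → EuclideanSpace ℝ (Fin d))
    (hgrad : ∀ θ ∈ Θ, HasGradientAt φ (g θ) θ)
    (hconc : ConcaveOn ℝ Θ (fun θ => Real.exp (α * φ θ)))
    (θ θ' : EuclideanSpace ℝ (Fin d)) (hθ : θ ∈ Θ) (hθ' : θ' ∈ Θ) :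
    0 < 1 + α * ⟪g θ', θ - θ'⟫ ∧
      0 ≤ (1 / α) * Real.log (1 + α * ⟪g θ', θ - θ'⟫) - (φ θ - φ θ') := by
  set c : ℝ →ᵃ[ℝ] EuclideanSpace ℝ (Fin d) := AffineMap.lineMap θ' θ with hc
  have hc0 : c 0 = θ' := AffineMap.lineMap_apply_zero θ' θ
  have hc1 : c 1 = θ := AffineMap.lineMap_apply_one θ' θ
  -- derivative of the path
  have hpath : HasDerivAt (fun t : ℝ => c t) (θ - θ') 0 := by
    have : HasDerivAt (fun t : ℝ => t • (θ - θ') + θ') ((1:ℝ) • (θ - θ')) 0 :=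
      ((hasDerivAt_id (0:ℝ)).smul_const (θ - θ')).add_const θ'
    have heq : (fun t : ℝ => c t) = fun t : ℝ => t • (θ - θ') + θ' := by
      funext t; simp [hc, AffineMap.lineMap_apply_module]; module
    rw [heq]; simpa using this
  have hφc : HasDerivAt (fun t : ℝ => φ (c t)) ⟪g θ', θ - θ'⟫ 0 := by
    have hf : HasFDerivAt φ ((InnerProductSpace.toDual ℝ (EuclideanSpace ℝ (Fin d))) (g θ')) (c 0) := by
      rw [hc0]; exact (hgrad θ' hθ').hasFDerivAt
    have := hf.comp_hasDerivAt 0 hpath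
    simp at this; exact this
  have hψ : HasDerivAt (fun t : ℝ => -Real.exp (α * φ (c t)))
      (-(Real.exp (α * φ θ') * (α * ⟪g θ', θ - θ'⟫))) 0 := by
    have := ((hφc.const_mul α).exp).neg
    simp [hc0, mul_comm] at this; exact this
  have hcv : ConvexOn ℝ (c ⁻¹' Θ) ((fun x => -Real.exp (α * φ x)) ∘ c) :=
    hconc.neg.comp_affineMap c
  have h0 : (0:ℝ) ∈ c ⁻¹' Θ := by simp [Set.mem_preimage, hc0, hθ']
  have h1 : (1:ℝ) ∈ c ⁻¹' Θ := by simp [Set.mem_preimage, hc1, hθ]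
  have key := hcv.le_slope_of_hasDerivAt h0 h1 one_pos hψ
  rw [slope_def_field] at key
  simp only [Function.comp, hc0, hc1] at key
  -- key : -(exp(αφθ')·(α·⟪⟫)) ≤ ((-exp(αφθ)) - (-exp(αφθ')))/(1-0)
  have key2 : Real.exp (α * φ θ) ≤ Real.exp (α * φ θ') * (1 + α * ⟪g θ', θ - θ'⟫) := by
    have h := key
    field_simp at h ⊢
    nlinarith [Real.exp_pos (α * φ θ), Real.exp_pos (α * φ θ')]
  have hpos : 0 < 1 + α * ⟪g θ', θ - θ'⟫ := by
    have h1 := Real.exp_pos (α * φ θ)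
    have h2 := Real.exp_pos (α * φ θ')
    nlinarith
  refine ⟨hpos, ?_⟩
  have hlog : α * φ θ ≤ α * φ θ' + Real.log (1 + α * ⟪g θ', θ - θ'⟫) := by
    have := Real.log_le_log (Real.exp_pos (α * φ θ)) key2
    rwa [Real.log_exp, Real.log_mul (Real.exp_pos _).ne' hpos.ne', Real.log_exp] at this
  have : φ θ - φ θ' ≤ (1 / α) * Real.log (1 + α * ⟪g θ', θ - θ'⟫) := by
    rw [div_mul_eq_mul_div, le_div_iff₀ hα]
    nlinarith
  linarith
end

section
/- Let Θ ⊆ ℝ^d be convex open, α > 0, and φ : Θ → ℝ differentiable with Φ = exp(α·φ) strictly concave. Then L[θ:θ'] = (1/α)·log(1 + α·⟨∇φ(θ'), θ − θ'⟩) − (φ(θ) − φ(θ')) = 0 if and only if θ = θ'. -/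
open RealInnerProductSpace Real

/-- Key strict inequality: if `θ ≠ θ'`, then
`exp (α φ θ) < exp (α φ θ') * (1 + α ⟪g θ', θ - θ'⟫)`. -/
lemma L_alpha_key
    {d : ℕ} {Θ : Set (EuclideanSpace ℝ (Fin d))} (hΘconv : Convex ℝ Θ)
    {α : ℝ}
    (φ : EuclideanSpace ℝ (Fin d) → ℝ) (g : EuclideanSpace ℝ (Fin d) → EuclideanSpace ℝ (Fin d))
    (hgrad : ∀ θ ∈ Θ, HasGradientAt φ (g θ) θ)
    (hconc : StrictConcaveOn ℝ Θ (fun θ => Real.exp (α * φ θ)))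
    (θ θ' : EuclideanSpace ℝ (Fin d)) (hθ : θ ∈ Θ) (hθ' : θ' ∈ Θ) (hne : θ ≠ θ') :
    Real.exp (α * φ θ) < Real.exp (α * φ θ') * (1 + α * ⟪g θ', θ - θ'⟫) := by
  set v : EuclideanSpace ℝ (Fin d) := θ - θ' with hv
  have hvne : v ≠ 0 := sub_ne_zero.mpr hne
  set γ : ℝ → EuclideanSpace ℝ (Fin d) := fun t => θ' + t • v with hγ
  set F : ℝ → ℝ := fun t => Real.exp (α * φ (γ t)) with hF
  set S : Set ℝ := γ ⁻¹' Θ with hS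
  have hγinj : Function.Injective γ := by
    intro a b hab
    have : a • v = b • v := by
      have := hab
      simpa [hγ, add_right_injective] using this
    have := sub_eq_zero.mpr this
    rw [← sub_smul] at this
    rcases smul_eq_zero.mp this with h | h
    · exact sub_eq_zero.mp h
    · exact absurd h hvne
  have hγaff : ∀ a b : ℝ, a + b = 1 → ∀ x y : ℝ,
      γ (a * x + b * y) = a • γ x + b • γ y := by
    intro a b hab x y
    simp only [hγ]
    have hb' : b = 1 - a := by linarith
    subst hb'
    module
  have hSconv : Convex ℝ S := by
    intro x hx y hy a b ha hb hab
    show γ (a • x + b • y) ∈ Θ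
    have h1 : γ (a * x + b * y) = a • γ x + b • γ y := hγaff a b hab x y
    simpa [smul_eq_mul, h1] using hΘconv hx hy ha hb hab
  have hFconc : StrictConcaveOn ℝ S F := by
    refine ⟨hSconv, ?_⟩
    intro x hx y hy hxy a b ha hb hab
    have h1 : γ (a * x + b * y) = a • γ x + b • γ y := hγaff a b hab x y
    have h2 : γ x ≠ γ y := fun h => hxy (hγinj h)
    have := hconc.2 hx hy h2 ha hb hab
    simpa [hF, smul_eq_mul, h1] using this
  have h0 : (0 : ℝ) ∈ S := by simp [hS, hγ, hθ']
  have h1 : (1 : ℝ) ∈ S := by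
    have : γ 1 = θ := by simp [hγ, hv]
    simp [hS, Set.mem_preimage, this, hθ]
  -- derivative of F at 0
  have hγd : HasDerivAt γ v 0 := by
    have : HasDerivAt (fun t : ℝ => t • v) ((1 : ℝ) • v) 0 := (hasDerivAt_id 0).smul_const v
    exact (by simpa using this : HasDerivAt (fun t : ℝ => t • v) v 0).const_add θ'
  have hφd : HasDerivAt (fun t => φ (γ t)) ⟪g θ', v⟫ 0 := by
    have hgr := hgrad θ' hθ'
    have hfd : HasFDerivAt φ ((InnerProductSpace.toDual ℝ _) (g θ')) θ' := hgr
    have hγ0 : γ 0 = θ' := by simp [hγ]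
    have h2 : HasFDerivAt φ ((InnerProductSpace.toDual ℝ _) (g θ')) (γ 0) := by
      rw [hγ0]; exact hfd
    have := h2.comp_hasDerivAt 0 hγd
    simp [Function.comp, InnerProductSpace.toDual_apply_apply] at this
    exact this
  have hFd : HasDerivAt F (Real.exp (α * φ θ') * (α * ⟪g θ', v⟫)) 0 := by
    have h := ((hφd.const_mul α).exp)
    have hγ0 : γ 0 = θ' := by simp [hγ]
    simpa [hF, hγ0, mul_comm] using h
  have hslope := hFconc.slope_lt_of_hasDerivAt h0 h1 one_pos hFd
  have hsl : slope F 0 1 = F 1 - F 0 := by simp [slope_def_field]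
  rw [hsl] at hslope
  have hF1 : F 1 = Real.exp (α * φ θ) := by
    have : γ 1 = θ := by simp [hγ, hv]
    simp [hF, this]
  have hF0 : F 0 = Real.exp (α * φ θ') := by simp [hF, hγ]
  rw [hF1, hF0] at hslope
  nlinarith [hslope]

/-- For a strictly α-exponentially concave function, the
L^(α)-divergence vanishes iff the two points coincide. -/
theorem L_alpha_divergence_eq_zero_iff
    {d : ℕ} {Θ : Set (EuclideanSpace ℝ (Fin d))} (hΘconv : Convex ℝ Θ)
    (hΘopen : IsOpen Θ) {α : ℝ} (hα : 0 < α)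
    (φ : EuclideanSpace ℝ (Fin d) → ℝ) (g : EuclideanSpace ℝ (Fin d) → EuclideanSpace ℝ (Fin d))
    (hgrad : ∀ θ ∈ Θ, HasGradientAt φ (g θ) θ)
    (hconc : StrictConcaveOn ℝ Θ (fun θ => Real.exp (α * φ θ)))
    (θ θ' : EuclideanSpace ℝ (Fin d)) (hθ : θ ∈ Θ) (hθ' : θ' ∈ Θ) :
    (1 / α) * Real.log (1 + α * ⟪g θ', θ - θ'⟫) - (φ θ - φ θ') = 0 ↔ θ = θ' := by
  constructor
  · intro hL
    by_contra hne
    have hkey := L_alpha_key hΘconv φ g hgrad hconc θ θ' hθ hθ' hne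
    have hexp : 0 < Real.exp (α * φ θ) := Real.exp_pos _
    have hpos : 0 < 1 + α * ⟪g θ', θ - θ'⟫ := by
      by_contra h
      push_neg at h
      nlinarith [Real.exp_pos (α * φ θ'), hkey]
    have hlog : α * φ θ < α * φ θ' + Real.log (1 + α * ⟪g θ', θ - θ'⟫) := by
      have := Real.log_lt_log hexp hkey
      rwa [Real.log_exp, Real.log_mul (Real.exp_ne_zero _) (ne_of_gt hpos), Real.log_exp] at this
    have hLpos : 0 < (1 / α) * Real.log (1 + α * ⟪g θ', θ - θ'⟫) - (φ θ - φ θ') := by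
      rw [sub_pos, one_div, ← div_eq_inv_mul, lt_div_iff₀ hα]
      nlinarith [hlog]
    linarith [hLpos, hL.le, hL.ge]
  · intro h
    subst h
    simp
end

section
/- Let α > 0 and let ψ(y) = inf_{θ ∈ Θ} [ (1/α)·log(1 + α·⟨θ, y⟩) − φ(θ) ] be the α-conjugate of an α-exponentially concave function φ on a convex set Θ ⊆ (0,∞)^d, defined for y in a convex set Ω ⊆ (0,∞)^d on which the infimum is finite and 1 + α⟨θ,y⟩ > 0 for all θ ∈ Θ. Then ψ is α-exponentially concave on Ω, i.e., exp(α·ψ) is concave. -/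
open RealInnerProductSpace Real

/-- The α-conjugate ψ of an α-exponentially concave function φ is
itself α-exponentially concave on Ω. -/
theorem alpha_conjugate_exp_concave
    {d : ℕ} {Θ Ω : Set (EuclideanSpace ℝ (Fin d))}
    (hΘconv : Convex ℝ Θ) (hΘne : Θ.Nonempty)
    (hΘpos : ∀ θ ∈ Θ, ∀ i, 0 < θ i) (hΩpos : ∀ y ∈ Ω, ∀ i, 0 < y i)
    (hΩconv : Convex ℝ Ω) {α : ℝ} (hα : 0 < α)
    (φ : EuclideanSpace ℝ (Fin d) → ℝ)
    (hconc : ConcaveOn ℝ Θ (fun θ => Real.exp (α * φ θ)))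
    (hpos : ∀ θ ∈ Θ, ∀ y ∈ Ω, 0 < 1 + α * ⟪θ, y⟫)
    (ψ : EuclideanSpace ℝ (Fin d) → ℝ)
    (hψ : ∀ y ∈ Ω, ψ y = ⨅ θ : Θ, ((1 / α) * Real.log (1 + α * ⟪(θ : EuclideanSpace ℝ (Fin d)), y⟫) - φ θ))
    (hbdd : ∀ y ∈ Ω, BddBelow (Set.range fun θ : Θ =>
        (1 / α) * Real.log (1 + α * ⟪(θ : EuclideanSpace ℝ (Fin d)), y⟫) - φ θ)) :
    ConcaveOn ℝ Ω (fun y => Real.exp (α * ψ y)) := by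
  have hne : Nonempty Θ := hΘne.to_subtype
  set h : EuclideanSpace ℝ (Fin d) → Θ → ℝ := fun y θ =>
    (1 + α * ⟪(θ : EuclideanSpace ℝ (Fin d)), y⟫) * Real.exp (-(α * φ θ)) with hh
  have hposh : ∀ y ∈ Ω, ∀ θ : Θ, 0 < h y θ := fun y hy θ =>
    mul_pos (hpos θ θ.2 y hy) (Real.exp_pos _)
  have hbddh : ∀ y ∈ Ω, BddBelow (Set.range (h y)) := by
    intro y hy
    exact ⟨0, by rintro _ ⟨θ, rfl⟩; exact (hposh y hy θ).le⟩
  have key : ∀ y ∈ Ω, Real.exp (α * ψ y) = ⨅ θ : Θ, h y θ := by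
    intro y hy
    rw [hψ y hy]
    have hmono : Monotone fun x : ℝ => Real.exp (α * x) := fun a b hab =>
      Real.exp_le_exp.2 (by nlinarith)
    have hcont : ContinuousAt (fun x : ℝ => Real.exp (α * x))
        (⨅ θ : Θ, ((1 / α) * Real.log (1 + α * ⟪(θ : EuclideanSpace ℝ (Fin d)), y⟫) - φ θ)) :=
      (Real.continuous_exp.comp (continuous_const.mul continuous_id)).continuousAt
    rw [hmono.map_ciInf_of_continuousAt hcont (hbdd y hy)]
    congr 1
    funext θ
    have h1 : α * ((1 / α) * Real.log (1 + α * ⟪(θ : EuclideanSpace ℝ (Fin d)), y⟫) - φ θ)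
        = Real.log (1 + α * ⟪(θ : EuclideanSpace ℝ (Fin d)), y⟫) + (-(α * φ θ)) := by
      field_simp; ring
    rw [h1, Real.exp_add, Real.exp_log (hpos θ θ.2 y hy)]
  refine ⟨hΩconv, ?_⟩
  intro y1 hy1 y2 hy2 a b ha hb hab
  have hz : a • y1 + b • y2 ∈ Ω := hΩconv hy1 hy2 ha hb hab
  simp only [smul_eq_mul]
  rw [key _ hz, key _ hy1, key _ hy2]
  apply le_ciInf
  intro θ
  have hsplit : h (a • y1 + b • y2) θ = a * h y1 θ + b * h y2 θ := by
    simp only [hh, inner_add_right, inner_smul_right]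
    nlinarith [Real.exp_pos (-(α * φ θ))]
  rw [hsplit]
  have h1 : a * (⨅ θ : Θ, h y1 θ) ≤ a * h y1 θ :=
    mul_le_mul_of_nonneg_left (ciInf_le (hbddh y1 hy1) θ) ha
  have h2 : b * (⨅ θ : Θ, h y2 θ) ≤ b * h y2 θ :=
    mul_le_mul_of_nonneg_left (ciInf_le (hbddh y2 hy2) θ) hb
  linarith
end

section
/- Let n ≥ 2, d = n − 1, and ψ(y) = (1/n)·Σ_{i=1}^{d} log y_i on Ω = (0,∞)^d. For p, q ∈ Δ_n set η_i = p_i/p_n and y_i = q_i/q_n for i = 1,…,d. Then the Dirichlet cost c(p,q) = log((1/n)Σ_{i=1}^n q_i/p_i) − (1/n)Σ_{i=1}^n log(q_i/p_i) equals the L^(1)-divergence L_ψ^(1)[y : η] = log(1 + ⟨∇ψ(η), y − η⟩) − (ψ(y) − ψ(η)). -/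
open Real

/-- The Dirichlet cost equals the L^(1)-divergence of
ψ(y) = (1/n) Σ_{i<n-1} log yᵢ in the coordinates ηᵢ = pᵢ/pₙ, yᵢ = qᵢ/qₙ. -/
theorem dirichlet_cost_eq_L1_divergence
    (d : ℕ) (hd : 1 ≤ d) (p q : Fin (d + 1) → ℝ)
    (hp : ∀ i, 0 < p i) (hq : ∀ i, 0 < q i)
    (hps : ∑ i, p i = 1) (hqs : ∑ i, q i = 1)
    (η y : Fin d → ℝ)
    (hη : ∀ i : Fin d, η i = p i.castSucc / p (Fin.last d))
    (hy : ∀ i : Fin d, y i = q i.castSucc / q (Fin.last d))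
    (n : ℕ) (hn : n = d + 1)
    (ψ : (Fin d → ℝ) → ℝ)
    (hψ : ∀ z : Fin d → ℝ, ψ z = (1 / n) * ∑ i, Real.log (z i)) :
    Real.log ((1 / n) * ∑ i, q i / p i) - (1 / n) * ∑ i, Real.log (q i / p i) =
      Real.log (1 + ∑ i, (1 / (n * η i)) * (y i - η i)) - (ψ y - ψ η) := by
  subst hn
  set P := p (Fin.last d) with hPdef
  set Q := q (Fin.last d) with hQdef
  have hP : 0 < P := hp _
  have hQ : 0 < Q := hq _
  have hcast : ((d + 1 : ℕ) : ℝ) = (d : ℝ) + 1 := by push_cast; ring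
  have hnR : (0:ℝ) < (d : ℝ) + 1 := by positivity
  set T : ℝ := ∑ i : Fin d, q i.castSucc / p i.castSucc with hT
  have hTpos : 0 < T := by
    apply Finset.sum_pos
    · intro i _; exact div_pos (hq _) (hp _)
    · exact ⟨⟨0, hd⟩, Finset.mem_univ _⟩
  have hSsplit : (∑ i : Fin (d+1), q i / p i) = T + Q / P := by
    rw [Fin.sum_univ_castSucc]
  have hSpos : 0 < ∑ i : Fin (d+1), q i / p i := by
    rw [hSsplit]; positivity
  have key : (1 + ∑ i, (1 / (((d+1:ℕ):ℝ) * η i)) * (y i - η i))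
      = (P / Q) * ((1/(((d+1:ℕ)):ℝ)) * ∑ i : Fin (d+1), q i / p i) := by
    have h1 : ∀ i : Fin d, (1 / (((d+1:ℕ):ℝ) * η i)) * (y i - η i)
        = (1/((d:ℝ)+1)) * ((P / Q) * (q i.castSucc / p i.castSucc)) - 1/((d:ℝ)+1) := by
      intro i
      rw [hη i, hy i, hcast]
      have h1 := (hp i.castSucc).ne'
      have h2 := (hq i.castSucc).ne'
      field_simp
    have hsum : ∑ i : Fin d, ((1/((d:ℝ)+1)) * ((P / Q) * (q i.castSucc / p i.castSucc))
        - 1/((d:ℝ)+1)) = (1/((d:ℝ)+1)) * ((P/Q) * T) - (d:ℝ) * (1/((d:ℝ)+1)) := by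
      rw [Finset.sum_sub_distrib, Finset.sum_const, Finset.card_univ, Fintype.card_fin,
        nsmul_eq_mul, ← Finset.mul_sum, ← Finset.mul_sum, hT]
    rw [Finset.sum_congr rfl (fun i _ => h1 i), hsum, hSsplit, hcast]
    field_simp
    ring
  rw [key, hψ, hψ, Real.log_mul (by positivity : (P/Q : ℝ) ≠ 0) (by positivity),
    Real.log_mul (by positivity : (1/((d+1:ℕ):ℝ)) ≠ 0) hSpos.ne',
    Real.log_div hP.ne' hQ.ne']
  have hlogq : ∀ i : Fin (d+1), Real.log (q i / p i) = Real.log (q i) - Real.log (p i) :=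
    fun i => Real.log_div (hq i).ne' (hp i).ne'
  have hlogy : ∀ i : Fin d, Real.log (y i) = Real.log (q i.castSucc) - Real.log Q := by
    intro i; rw [hy i]; exact Real.log_div (hq _).ne' hQ.ne'
  have hlogη : ∀ i : Fin d, Real.log (η i) = Real.log (p i.castSucc) - Real.log P := by
    intro i; rw [hη i]; exact Real.log_div (hp _).ne' hP.ne'
  rw [Finset.sum_congr rfl (fun i _ => hlogq i),
    Finset.sum_congr rfl (fun i _ => hlogy i),
    Finset.sum_congr rfl (fun i _ => hlogη i),
    Fin.sum_univ_castSucc (f := fun i => Real.log (q i) - Real.log (p i))]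
  simp only [Finset.sum_sub_distrib, Finset.sum_const, Finset.card_univ, Fintype.card_fin,
    nsmul_eq_mul, hcast]
  field_simp
  ring
end
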